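/- arXiv:2512.06109 — 3 statements merged into one kernel-verified Lean document; each statement's English description precedes it below -/
import Mathlib

section
/- For a finite measurable space X, a probability measure ρ with full support, a bounded measurable function f, and λ > 0, the unique probability measure minimizing π ↦ E_π[f] + (1/λ)·KL(π‖ρ) over measures π ≪ ρ is the exponentially tilted measure π*(x) = ρ(x)·exp(−λ f(x)) / E_ρ[exp(−λ f)]. -/
open Real Finset InformationTheory

/-!
Write `p` for the Gibbs measure `ρ e^{-λf} / Z`. Then `log (q/ρ) = log (q/p) - λ f - log Z`
pointwise, so the free energy of any probability vector `q` is `-(log Z)/λ + KL(q‖p)/λ`.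
Gibbs' inequality finishes the proof: `KL(q‖p) = ∑ p · klFun (q/p)` once `q` and `p` have the
same mass, and `klFun ≥ 0` on `[0, ∞)` with equality only at `1`.
-/

section GibbsInequality

variable {X : Type*} [Fintype X] {p q : X → ℝ}

lemma mul_log_div_eq_mul_klFun {a b : ℝ} (hb : 0 < b) :
    a * log (a / b) = b * klFun (a / b) + a - b := by
  rw [klFun_apply]
  field_simp
  ring

lemma sum_mul_log_div_eq_sum_mul_klFun (hp : ∀ x, 0 < p x) (hsum : ∑ x, q x = ∑ x, p x) :
    ∑ x, q x * log (q x / p x) = ∑ x, p x * klFun (q x / p x) := by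
  simp only [mul_log_div_eq_mul_klFun (hp _), sum_sub_distrib, sum_add_distrib, hsum,
    add_sub_cancel_right]

lemma sum_mul_log_div_nonneg (hp : ∀ x, 0 < p x) (hq : ∀ x, 0 ≤ q x)
    (hsum : ∑ x, q x = ∑ x, p x) : 0 ≤ ∑ x, q x * log (q x / p x) := by
  rw [sum_mul_log_div_eq_sum_mul_klFun hp hsum]
  exact sum_nonneg fun x _ => mul_nonneg (hp x).le (klFun_nonneg (div_nonneg (hq x) (hp x).le))

lemma eq_of_sum_mul_log_div_eq_zero (hp : ∀ x, 0 < p x) (hq : ∀ x, 0 ≤ q x)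
    (hsum : ∑ x, q x = ∑ x, p x) (h : ∑ x, q x * log (q x / p x) = 0) : q = p := by
  have hdiv_nonneg x : 0 ≤ q x / p x := div_nonneg (hq x) (hp x).le
  rw [sum_mul_log_div_eq_sum_mul_klFun hp hsum,
    sum_eq_zero_iff_of_nonneg fun x _ => mul_nonneg (hp x).le (klFun_nonneg (hdiv_nonneg x))] at h
  funext x
  have hkl : klFun (q x / p x) = 0 := (mul_eq_zero.mp (h x (mem_univ x))).resolve_left (hp x).ne'
  rw [klFun_eq_zero_iff (hdiv_nonneg x), div_eq_one_iff_eq (hp x).ne'] at hkl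
  exact hkl

end GibbsInequality

section GibbsMeasure

variable {X : Type*} [Fintype X] (ρ f : X → ℝ) (l : ℝ)

noncomputable def gibbsNormalizer : ℝ := ∑ z, ρ z * exp (-l * f z)

noncomputable def gibbsMeasure : X → ℝ := fun y => ρ y * exp (-l * f y) / gibbsNormalizer ρ f l

noncomputable def freeEnergy (q : X → ℝ) : ℝ :=
  ∑ x, q x * f x + (1 / l) * ∑ x, q x * log (q x / ρ x)

variable {ρ} [Nonempty X] (hρ : ∀ x, 0 < ρ x)
include hρ

lemma gibbsNormalizer_pos : 0 < gibbsNormalizer ρ f l :=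
  sum_pos (fun z _ => mul_pos (hρ z) (exp_pos _)) univ_nonempty

lemma gibbsMeasure_pos (x : X) : 0 < gibbsMeasure ρ f l x :=
  div_pos (mul_pos (hρ x) (exp_pos _)) (gibbsNormalizer_pos f l hρ)

lemma sum_gibbsMeasure : ∑ x, gibbsMeasure ρ f l x = 1 := by
  simp only [gibbsMeasure, ← sum_div]
  exact div_self (gibbsNormalizer_pos f l hρ).ne'

lemma log_gibbsMeasure_div (x : X) :
    log (gibbsMeasure ρ f l x / ρ x) = -l * f x - log (gibbsNormalizer ρ f l) := by
  have hZ := gibbsNormalizer_pos f l hρ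
  have hratio : gibbsMeasure ρ f l x / ρ x = exp (-l * f x) / gibbsNormalizer ρ f l := by
    unfold gibbsMeasure
    field_simp [(hρ x).ne']
  rw [hratio, log_div (exp_ne_zero _) hZ.ne', log_exp]


lemma mul_log_div_eq_mul_log_div_gibbsMeasure_add (a : ℝ) (x : X) :
    a * log (a / ρ x) = a * log (a / gibbsMeasure ρ f l x)
      + a * (-l * f x - log (gibbsNormalizer ρ f l)) := by
  rcases eq_or_ne a 0 with rfl | ha
  · simp
  have hp := (gibbsMeasure_pos f l hρ x).ne'
  rw [← log_gibbsMeasure_div f l hρ x, ← mul_add,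
    ← log_mul (div_ne_zero ha hp) (div_ne_zero hp (hρ x).ne'), div_mul_div_cancel₀ hp]

lemma freeEnergy_eq_freeEnergy_gibbsMeasure_add (hl : l ≠ 0) {q : X → ℝ} (hq : ∑ x, q x = 1) :
    freeEnergy ρ f l q = freeEnergy ρ f l (gibbsMeasure ρ f l)
      + (∑ x, q x * log (q x / gibbsMeasure ρ f l x)) / l := by
  have hexpand {r : X → ℝ} (hr : ∑ x, r x = 1) : freeEnergy ρ f l r
      = (∑ x, r x * log (r x / gibbsMeasure ρ f l x)) / l - log (gibbsNormalizer ρ f l) / l := by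
    simp only [freeEnergy, mul_log_div_eq_mul_log_div_gibbsMeasure_add f l hρ, sum_add_distrib,
      mul_sub, sum_sub_distrib, ← sum_mul, hr, mul_left_comm _ (-l), ← mul_sum]
    field_simp
    ring
  have hself : ∑ x, gibbsMeasure ρ f l x * log (gibbsMeasure ρ f l x / gibbsMeasure ρ f l x) = 0 :=
    sum_eq_zero fun x _ => by rw [div_self (gibbsMeasure_pos f l hρ x).ne', log_one, mul_zero]
  rw [hexpand hq, hexpand (sum_gibbsMeasure f l hρ), hself]
  ring

end GibbsMeasure

theorem entropic_risk_unique_minimizer_general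
    {X : Type*} [Fintype X] [Nonempty X]
    (ρ : X → ℝ) (hρ0 : ∀ x, 0 < ρ x)
    (f : X → ℝ) (l : ℝ) (hl : 0 < l) :
    ∀ q : X → ℝ,
      (∀ x, 0 ≤ q x) → (∑ x, q x = 1) → (∀ x, ρ x = 0 → q x = 0) →
      ((∑ x, (fun y => ρ y * Real.exp (-l * f y) / ∑ z, ρ z * Real.exp (-l * f z)) x * f x)
          + (1 / l) * ∑ x,
              (fun y => ρ y * Real.exp (-l * f y) / ∑ z, ρ z * Real.exp (-l * f z)) x *
                Real.log
                  ((fun y => ρ y * Real.exp (-l * f y) / ∑ z, ρ z * Real.exp (-l * f z)) x / ρ x)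
        ≤ (∑ x, q x * f x) + (1 / l) * ∑ x, q x * Real.log (q x / ρ x))
      ∧ ((∑ x, q x * f x) + (1 / l) * ∑ x, q x * Real.log (q x / ρ x)
            = (∑ x, (fun y => ρ y * Real.exp (-l * f y) / ∑ z, ρ z * Real.exp (-l * f z)) x * f x)
              + (1 / l) * ∑ x,
                  (fun y => ρ y * Real.exp (-l * f y) / ∑ z, ρ z * Real.exp (-l * f z)) x *
                    Real.log
                      ((fun y => ρ y * Real.exp (-l * f y) / ∑ z, ρ z * Real.exp (-l * f z)) x / ρ x)
          → q = fun y => ρ y * Real.exp (-l * f y) / ∑ z, ρ z * Real.exp (-l * f z)) := by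
  intro q hq0 hq1 _
  change freeEnergy ρ f l (gibbsMeasure ρ f l) ≤ freeEnergy ρ f l q ∧
    (freeEnergy ρ f l q = freeEnergy ρ f l (gibbsMeasure ρ f l) → q = gibbsMeasure ρ f l)
  have hp := gibbsMeasure_pos f l hρ0
  have hsum : ∑ x, q x = ∑ x, gibbsMeasure ρ f l x := by rw [hq1, sum_gibbsMeasure f l hρ0]
  rw [freeEnergy_eq_freeEnergy_gibbsMeasure_add f l hρ0 hl.ne' hq1, le_add_iff_nonneg_right,
    add_eq_left, div_eq_zero_iff, or_iff_left hl.ne']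
  exact ⟨div_nonneg (sum_mul_log_div_nonneg hp hq0 hsum) hl.le,
    eq_of_sum_mul_log_div_eq_zero hp hq0 hsum⟩

/-- For a finite space, a full-support probability measure `ρ`, a function `f`, and `λ > 0`,
the unique minimizer of `q ↦ E_q[f] + (1/λ)·KL(q‖ρ)` over probability measures `q ≪ ρ`
is the exponentially tilted measure `q*(x) = ρ(x)·exp(-λ f(x)) / E_ρ[exp(-λ f)]`. -/
theorem entropic_risk_unique_minimizer
    {X : Type*} [Fintype X] [Nonempty X]
    (ρ : X → ℝ) (hρ0 : ∀ x, 0 < ρ x) (hρ1 : ∑ x, ρ x = 1)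
    (f : X → ℝ) (l : ℝ) (hl : 0 < l) :
    ∀ q : X → ℝ,
      (∀ x, 0 ≤ q x) → (∑ x, q x = 1) → (∀ x, ρ x = 0 → q x = 0) →
      ((∑ x, (fun y => ρ y * Real.exp (-l * f y) / ∑ z, ρ z * Real.exp (-l * f z)) x * f x)
          + (1 / l) * ∑ x,
              (fun y => ρ y * Real.exp (-l * f y) / ∑ z, ρ z * Real.exp (-l * f z)) x *
                Real.log
                  ((fun y => ρ y * Real.exp (-l * f y) / ∑ z, ρ z * Real.exp (-l * f z)) x / ρ x)
        ≤ (∑ x, q x * f x) + (1 / l) * ∑ x, q x * Real.log (q x / ρ x))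
      ∧ ((∑ x, q x * f x) + (1 / l) * ∑ x, q x * Real.log (q x / ρ x)
            = (∑ x, (fun y => ρ y * Real.exp (-l * f y) / ∑ z, ρ z * Real.exp (-l * f z)) x * f x)
              + (1 / l) * ∑ x,
                  (fun y => ρ y * Real.exp (-l * f y) / ∑ z, ρ z * Real.exp (-l * f z)) x *
                    Real.log
                      ((fun y => ρ y * Real.exp (-l * f y) / ∑ z, ρ z * Real.exp (-l * f z)) x / ρ x)
          → q = fun y => ρ y * Real.exp (-l * f y) / ∑ z, ρ z * Real.exp (-l * f z)) :=
  entropic_risk_unique_minimizer_general ρ hρ0 f l hl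
end

section
/- (Compositionality of desirability functions) If the terminal desirability decomposes as z_T = Σ_{n=1}^N z_T^{(n)} and each z_t^{(n)} satisfies the linear backward recursion z_t^{(n)}(x) = E_{u∼ρ_t(·|x)}[e^{−λ c_t(x,u)} E_{x'∼ι_t(·|x,u)}[z_{t+1}^{(n)}(x')]], then z_t = Σ_{n=1}^N z_t^{(n)} for all t = 0,…,T, where z_t satisfies the same recursion with terminal condition z_T. -/
open Real Finset

/-! The one-step backup `f ↦ E_ρ[exp(-λ c) E_ι[f]]` is linear, so `Σ_n z^{(n)}` obeys the same
backward recursion as `z` with the same terminal value, and backward recursions are determined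
by their terminal value. -/

theorem eq_of_backward_recursion {α : Type*} {T : ℕ} (F : ℕ → α → α) {f g : ℕ → α}
    (hf : ∀ t < T, f t = F t (f (t + 1))) (hg : ∀ t < T, g t = F t (g (t + 1)))
    (hT : f T = g T) : ∀ t ≤ T, f t = g t := fun _ ht =>
  Nat.decreasingInduction (fun k hk ih => by rw [hf k hk, hg k hk, ih]) hT ht

noncomputable def desirabilityBackup {S U : Type*} [Fintype S] [Fintype U]
    (ρ : ℕ → S → U → ℝ) (ι : ℕ → S → U → S → ℝ) (c : ℕ → S → U → ℝ) (l : ℝ) (t : ℕ) :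
    (S → ℝ) →ₗ[ℝ] (S → ℝ) where
  toFun f x := ∑ u, ρ t x u * (exp (-l * c t x u) * ∑ x', ι t x u x' * f x')
  map_add' f g := by
    ext x
    simp only [Pi.add_apply, mul_add, sum_add_distrib]
  map_smul' a f := by
    ext x
    simp only [Pi.smul_apply, smul_eq_mul, RingHom.id_apply, mul_sum, mul_left_comm a]

theorem desirability_compositionality_general
    {S U : Type*} [Fintype S] [Fintype U]
    (T : ℕ) (N : ℕ) (l : ℝ)
    (ρ : ℕ → S → U → ℝ)
    (ι : ℕ → S → U → S → ℝ)
    (c : ℕ → S → U → ℝ)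
    (z : ℕ → S → ℝ) (zn : Fin N → ℕ → S → ℝ)
    (hzT : ∀ x, z T x = ∑ n, zn n T x)
    (hznrec : ∀ n t, t < T → ∀ x,
      zn n t x
        = ∑ u, ρ t x u * (Real.exp (-l * c t x u) * ∑ x', ι t x u x' * zn n (t + 1) x'))
    (hzrec : ∀ t, t < T → ∀ x,
      z t x = ∑ u, ρ t x u * (Real.exp (-l * c t x u) * ∑ x', ι t x u x' * z (t + 1) x')) :
    ∀ t, t ≤ T → ∀ x, z t x = ∑ n, zn n t x := by
  have hsum : ∀ t < T, ∑ n, zn n t = desirabilityBackup ρ ι c l t (∑ n, zn n (t + 1)) :=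
      fun t ht => by
    rw [map_sum]
    exact sum_congr rfl fun n _ => funext (hznrec n t ht)
  intro t ht x
  have h := eq_of_backward_recursion (desirabilityBackup ρ ι c l ·) (fun t ht => funext (hzrec t ht)) hsum
    (funext fun x => by rw [hzT, Finset.sum_apply]) t ht
  rw [h, Finset.sum_apply]

/-- Compositionality of desirability functions: if the terminal desirability decomposes as
`z_T = Σ_n z_T^{(n)}` with `z_T^{(n)} = γ_n exp(-λ c_T^{(n)})`, `γ_n > 0`, and both `z`
and each `z^{(n)}` satisfy the linear backward recursion
`z_t(x) = E_{u∼ρ_t(·|x)}[exp(-λ c_t(x,u)) E_{x'∼ι_t(·|x,u)}[z_{t+1}(x')]]`,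
then `z_t = Σ_n z_t^{(n)}` for all `t ≤ T`. -/
theorem desirability_compositionality
    {S U : Type*} [Fintype S] [Fintype U] [Nonempty S] [Nonempty U]
    (T : ℕ) (N : ℕ) (l : ℝ) (hl : 0 < l)
    (ρ : ℕ → S → U → ℝ) (hρ0 : ∀ t x u, 0 ≤ ρ t x u) (hρ1 : ∀ t x, ∑ u, ρ t x u = 1)
    (ι : ℕ → S → U → S → ℝ) (hι0 : ∀ t x u x', 0 ≤ ι t x u x')
    (hι1 : ∀ t x u, ∑ x', ι t x u x' = 1)
    (c : ℕ → S → U → ℝ) (cT : Fin N → S → ℝ) (γ : Fin N → ℝ) (hγ : ∀ n, 0 < γ n)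
    (z : ℕ → S → ℝ) (zn : Fin N → ℕ → S → ℝ)
    (hznT : ∀ n x, zn n T x = γ n * Real.exp (-l * cT n x))
    (hzT : ∀ x, z T x = ∑ n, zn n T x)
    (hznrec : ∀ n t, t < T → ∀ x,
      zn n t x
        = ∑ u, ρ t x u * (Real.exp (-l * c t x u) * ∑ x', ι t x u x' * zn n (t + 1) x'))
    (hzrec : ∀ t, t < T → ∀ x,
      z t x = ∑ u, ρ t x u * (Real.exp (-l * c t x u) * ∑ x', ι t x u x' * z (t + 1) x')) :
    ∀ t, t ≤ T → ∀ x, z t x = ∑ n, zn n t x :=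
  desirability_compositionality_general T N l ρ ι c z zn hzT hznrec hzrec
end

section
/- For λ > 0 and bounded f on a finite probability space with full-support measure ρ, let σ_ρ(f) = (1/λ) log E_ρ[e^{−λ f}]; then the minimal penalty function recovered by duality, α(π) = sup_f { −σ_ρ(f) − E_π[f] }, equals (1/λ)·KL(π‖ρ) for every probability measure π ≪ ρ. -/
open Real Finset

/-- Recovery of the minimal penalty function for the entropic risk measure: for `λ > 0`,
full-support `ρ` on a finite set, and a probability measure `q ≪ ρ`, the supremum over
functions `f` of `-σ_ρ(f) - E_q[f]`, where `σ_ρ(f) = (1/λ) log E_ρ[e^{-λ f}]`, equals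
`(1/λ)·KL(q‖ρ)`. -/
theorem minimal_penalty_is_kl
    {X : Type*} [Fintype X] [Nonempty X]
    (ρ : X → ℝ) (hρ0 : ∀ x, 0 < ρ x) (hρ1 : ∑ x, ρ x = 1)
    (q : X → ℝ) (hq0 : ∀ x, 0 ≤ q x) (hq1 : ∑ x, q x = 1)
    (habs : ∀ x, ρ x = 0 → q x = 0)
    (l : ℝ) (hl : 0 < l) :
    IsLUB
      {v : ℝ | ∃ f : X → ℝ,
        v = -((1 / l) * Real.log (∑ x, ρ x * Real.exp (-l * f x))) - ∑ x, q x * f x}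
      ((1 / l) * ∑ x, q x * Real.log (q x / ρ x)) := by
  set K := ∑ x, q x * Real.log (q x / ρ x) with hK
  constructor
  · -- upper bound
    rintro v ⟨f, rfl⟩
    set Z := ∑ x, ρ x * Real.exp (-l * f x) with hZ
    have hZpos : 0 < Z :=
      Finset.sum_pos (fun x _ => mul_pos (hρ0 x) (Real.exp_pos _)) Finset.univ_nonempty
    have key : ∑ x, (q x * (-l * f x) - q x * Real.log (q x / ρ x) - q x * Real.log Z)
        ≤ 0 := by
      have h1 : ∀ x ∈ Finset.univ,
          q x * (-l * f x) - q x * Real.log (q x / ρ x) - q x * Real.log Z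
            ≤ ρ x * Real.exp (-l * f x) / Z - q x := by
        intro x _
        rcases eq_or_lt_of_le (hq0 x) with h0 | hpos
        · rw [← h0]
          simp only [zero_mul, zero_sub, sub_zero, neg_zero, sub_self]
          have : (0:ℝ) ≤ ρ x * Real.exp (-l * f x) / Z :=
            div_nonneg (mul_nonneg (hρ0 x).le (Real.exp_pos _).le) hZpos.le
          linarith
        · have hρx := hρ0 x
          have ht : 0 < ρ x * Real.exp (-l * f x) / (q x * Z) := by positivity
          have hlog := Real.log_le_sub_one_of_pos ht
          have hexp : Real.log (ρ x * Real.exp (-l * f x) / (q x * Z))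
              = -l * f x - Real.log (q x / ρ x) - Real.log Z := by
            rw [Real.log_div (by positivity) (by positivity),
              Real.log_mul (ne_of_gt hρx) (ne_of_gt (Real.exp_pos _)),
              Real.log_mul (ne_of_gt hpos) (ne_of_gt hZpos),
              Real.log_exp, Real.log_div (ne_of_gt hpos) (ne_of_gt hρx)]
            ring
          have := mul_le_mul_of_nonneg_left hlog (le_of_lt hpos)
          rw [hexp] at this
          calc q x * (-l * f x) - q x * Real.log (q x / ρ x) - q x * Real.log Z
              = q x * (-l * f x - Real.log (q x / ρ x) - Real.log Z) := by ring
            _ ≤ q x * (ρ x * Real.exp (-l * f x) / (q x * Z) - 1) := this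
            _ = ρ x * Real.exp (-l * f x) / Z - q x := by
                field_simp
      calc ∑ x, (q x * (-l * f x) - q x * Real.log (q x / ρ x) - q x * Real.log Z)
          ≤ ∑ x, (ρ x * Real.exp (-l * f x) / Z - q x) := Finset.sum_le_sum h1
        _ = 0 := by
            rw [Finset.sum_sub_distrib, ← Finset.sum_div, hq1, ← hZ,
              div_self (ne_of_gt hZpos)]
            norm_num
    have hsum : ∑ x, q x * (-l * f x) = -l * ∑ x, q x * f x := by
      rw [Finset.mul_sum]; exact Finset.sum_congr rfl fun x _ => by ring
    have hsumZ : ∑ x, q x * Real.log Z = Real.log Z := by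
      rw [← Finset.sum_mul, hq1, one_mul]
    rw [Finset.sum_sub_distrib, Finset.sum_sub_distrib, hsum, hsumZ, ← hK] at key
    have h2 : -Real.log Z - l * (∑ x, q x * f x) ≤ K := by linarith
    have := mul_le_mul_of_nonneg_left h2 (le_of_lt (one_div_pos.mpr hl))
    calc -(1 / l * Real.log Z) - ∑ x, q x * f x
        = 1 / l * (-Real.log Z - l * (∑ x, q x * f x)) := by
          field_simp
      _ ≤ 1 / l * K := this
  · -- least upper bound
    intro b hb
    refine le_of_forall_pos_le_add fun ε hε => ?_
    set c := ∑ x, (if q x = 0 then ρ x else 0) with hc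
    have hc0 : 0 ≤ c := Finset.sum_nonneg fun x _ => by
      split <;> [exact le_of_lt (hρ0 x); rfl]
    have hc1 : (0:ℝ) < c + 1 := by linarith
    set t := l * ε / (c + 1) with htdef
    have ht : 0 < t := by positivity
    set f : X → ℝ := fun x => if q x = 0 then -(1 / l) * Real.log t
      else -(1 / l) * Real.log (q x / ρ x) with hf
    have hterm : ∀ x, ρ x * Real.exp (-l * f x)
        = (if q x = 0 then ρ x * t else q x) := by
      intro x
      by_cases h : q x = 0
      · simp only [hf]
        rw [if_pos h, if_pos h]
        have harg : -l * (-(1 / l) * Real.log t) = Real.log t := by field_simp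
        rw [harg, Real.exp_log ht]
      · have hqx : 0 < q x := lt_of_le_of_ne (hq0 x) (Ne.symm h)
        simp only [hf]
        rw [if_neg h, if_neg h]
        have harg : -l * (-(1 / l) * Real.log (q x / ρ x)) = Real.log (q x / ρ x) := by
          field_simp
        rw [harg, Real.exp_log (div_pos hqx (hρ0 x))]
        rw [mul_comm, div_mul_eq_mul_div, mul_div_assoc, div_self (hρ0 x).ne', mul_one]
    have hZval : ∑ x, ρ x * Real.exp (-l * f x) = c * t + 1 := by
      rw [Finset.sum_congr rfl fun x _ => hterm x]
      have : ∀ x ∈ Finset.univ, (if q x = 0 then ρ x * t else q x)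
          = (if q x = 0 then ρ x else 0) * t + (if q x = 0 then 0 else q x) := by
        intro x _; split <;> simp
      rw [Finset.sum_congr rfl this, Finset.sum_add_distrib, ← Finset.sum_mul, ← hc]
      have : ∑ x, (if q x = 0 then 0 else q x) = ∑ x, q x :=
        Finset.sum_congr rfl fun x _ => by split <;> simp_all
      rw [this, hq1]
    have hEval : ∑ x, q x * f x = -(1 / l) * K := by
      rw [hK, Finset.mul_sum]
      refine Finset.sum_congr rfl fun x _ => ?_
      simp only [hf]
      by_cases h : q x = 0
      · rw [if_pos h, h]; ring
      · rw [if_neg h]; ring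
    have hmem : -((1 / l) * Real.log (c * t + 1)) - (-(1 / l) * K) ≤ b := by
      apply hb
      exact ⟨f, by rw [hZval, hEval]⟩
    have hlog : Real.log (c * t + 1) ≤ c * t :=
      le_trans (Real.log_le_sub_one_of_pos (by positivity)) (by linarith)
    have hct : c * t ≤ l * ε := by
      have : c * t ≤ (c + 1) * t := by nlinarith
      calc c * t ≤ (c + 1) * t := this
        _ = l * ε := by rw [htdef]; field_simp
    have : (1 / l) * Real.log (c * t + 1) ≤ ε := by
      calc (1 / l) * Real.log (c * t + 1) ≤ (1 / l) * (l * ε) := by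
            apply mul_le_mul_of_nonneg_left _ (le_of_lt (one_div_pos.mpr hl))
            linarith
        _ = ε := by field_simp
    linarith
end
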